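/- Let Y be a countable linear order, γ a limit ordinal, and M_0 < M_1 < … < M_{r−1} pairwise disjoint convex suborders of Y such that: (1) for every p < r and every c ∈ M_p, the tail {x ∈ M_p : x > c} has rank ≥ γ; and (2) every convex suborder of Y that does not contain a tail of any M_p has rank < γ. Then rk(Y) < γ + n for every n ∈ ℕ with 2^n > r. -/

import Mathlib

open Ordinal

/-- `RkGE α s` means that the rank of `s`, viewed as a linear order in its own right,
is at least `α`.  (`rk(s) ≥ β + 1` iff there is `c ∈ s` such that both
`{y ∈ s | y < c}` and `{y ∈ s | c < y}` have rank at least `β`; the clauses for `0`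
and limit ordinals are folded into the single quantifier `∀ β < α`.) -/
def RkGE {Y : Type*} [LinearOrder Y] : Ordinal → Set Y → Prop :=
  WellFounded.fix (C := fun _ => Set Y → Prop) Ordinal.lt_wf
    (fun α ih s => ∀ β, ∀ hβ : β < α,
      ∃ c ∈ s, ih β hβ {y ∈ s | y < c} ∧ ih β hβ {y ∈ s | c < y})

/-- `S` is a cut of the finite set `F`: a downward-closed (within `F`) subset of `F`.
For `F = {a_0 < … < a_{m-1}}` the cuts are exactly the `m + 1` lower segments of `F`,
and they index the `m + 1` intervals that `F` determines. -/
def IsCut {Y : Type*} [LinearOrder Y] (F S : Set Y) : Prop :=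
  S ⊆ F ∧ ∀ a ∈ F, ∀ b ∈ S, a < b → a ∈ S

/-- The interval of `Y` determined by the cut `S` of `F`: all points lying strictly above
every element of `S` and strictly below every element of `F \\ S`. -/
def cutInterval {Y : Type*} [LinearOrder Y] (F S : Set Y) : Set Y :=
  {y | (∀ a ∈ S, a < y) ∧ ∀ a ∈ F, a ∉ S → y < a}

/-- `RankGE α F` means `rk_Y(F) ≥ α` for a finite subset `F` of the linear order `Y`:
`rk_Y(F) ≥ β + 1` iff every interval determined by `F` contains a point `c` with
`rk_Y(F ∪ {c}) ≥ β` (the clauses for `0` and limits are folded into `∀ β < α`). -/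
def RankGE {Y : Type*} [LinearOrder Y] : Ordinal → Set Y → Prop :=
  WellFounded.fix (C := fun _ => Set Y → Prop) Ordinal.lt_wf
    (fun α ih F => ∀ β, ∀ hβ : β < α, ∀ S : Set Y, IsCut F S →
      ∃ c ∈ cutInterval F S, ih β hβ (insert c F))

lemma rkGE_iff {Y : Type*} [LinearOrder Y] (α : Ordinal) (s : Set Y) :
    RkGE α s ↔ ∀ β, β < α →
      ∃ c ∈ s, RkGE β {y ∈ s | y < c} ∧ RkGE β {y ∈ s | c < y} := by
  unfold RkGE
  rw [WellFounded.fix_eq]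

lemma rkGE_nonempty {Y : Type*} [LinearOrder Y] {α : Ordinal} (hα : 0 < α) {s : Set Y}
    (h : RkGE α s) : s.Nonempty := by
  obtain ⟨c, hc, -⟩ := (rkGE_iff α s).mp h 0 hα
  exact ⟨c, hc⟩

lemma key_count {Y : Type*} [LinearOrder Y]
    (γ : Ordinal) (hγ : Order.IsSuccLimit γ) (r : ℕ) (M : Fin r → Set Y)
    (htail : ∀ p, ∀ c ∈ M p, RkGE γ {x ∈ M p | c < x})
    (hsmall : ∀ S : Set Y, S.OrdConnected →
      (∀ p, ∀ c ∈ M p, ¬ {x ∈ M p | c < x} ⊆ S) → ¬ RkGE γ S)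
    (n : ℕ) : ∀ s : Set Y, s.OrdConnected → RkGE (γ + n) s →
      2 ^ n ≤ {p : Fin r | ∃ c ∈ M p, {x ∈ M p | c < x} ⊆ s}.ncard := by
  induction n with
  | zero =>
    intro s hconn hrk
    rw [Nat.cast_zero, add_zero] at hrk
    have hex : ∃ p, ∃ c ∈ M p, {x ∈ M p | c < x} ⊆ s := by
      by_contra h
      push_neg at h
      exact hsmall s hconn h hrk
    obtain ⟨p, hp⟩ := hex
    exact (Set.ncard_pos (Set.toFinite _)).mpr ⟨p, hp⟩
  | succ n ih =>
    intro s hconn hrk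
    have hlt : γ + (n : Ordinal) < γ + ((n : ℕ) + 1 : ℕ) := by
      rw [Nat.cast_add, Nat.cast_one, ← add_assoc]
      exact Order.lt_succ _
    obtain ⟨c, hc, hL, hR⟩ := (rkGE_iff _ s).mp hrk (γ + n) hlt
    have hLc : ({y ∈ s | y < c} : Set Y).OrdConnected := by
      have : {y ∈ s | y < c} = s ∩ Set.Iio c := rfl
      rw [this]; exact hconn.inter Set.ordConnected_Iio
    have hRc : ({y ∈ s | c < y} : Set Y).OrdConnected := by
      have : {y ∈ s | c < y} = s ∩ Set.Ioi c := rfl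
      rw [this]; exact hconn.inter Set.ordConnected_Ioi
    have h1 := ih _ hLc hL
    have h2 := ih _ hRc hR
    set A := {p : Fin r | ∃ d ∈ M p, {x ∈ M p | d < x} ⊆ {y ∈ s | y < c}}
    set B := {p : Fin r | ∃ d ∈ M p, {x ∈ M p | d < x} ⊆ {y ∈ s | c < y}}
    have hdisjAB : Disjoint A B := by
      rw [Set.disjoint_left]
      rintro p ⟨d1, hd1, h1'⟩ ⟨d2, hd2, h2'⟩
      set d := max d1 d2 with hd
      have hdM : d ∈ M p := by
        rcases max_cases d1 d2 with ⟨h, -⟩ | ⟨h, -⟩ <;> rw [hd, h] <;> assumption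
      obtain ⟨x, hxM, hxd⟩ := rkGE_nonempty hγ.pos (htail p d hdM)
      have hx1 : x ∈ {y ∈ s | y < c} := h1' ⟨hxM, lt_of_le_of_lt (le_max_left d1 d2) hxd⟩
      have hx2 : x ∈ {y ∈ s | c < y} := h2' ⟨hxM, lt_of_le_of_lt (le_max_right d1 d2) hxd⟩
      exact absurd hx1.2 (not_lt.mpr hx2.2.le)
    have hsub : A ∪ B ⊆ {p : Fin r | ∃ d ∈ M p, {x ∈ M p | d < x} ⊆ s} := by
      rintro p (⟨d, hd, h'⟩ | ⟨d, hd, h'⟩) <;>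
        exact ⟨d, hd, fun x hx => (h' hx).1⟩
    calc 2 ^ (n + 1) = 2 ^ n + 2 ^ n := by ring
      _ ≤ A.ncard + B.ncard := Nat.add_le_add h1 h2
      _ = (A ∪ B).ncard := (Set.ncard_union_eq hdisjAB (Set.toFinite _) (Set.toFinite _)).symm
      _ ≤ _ := Set.ncard_le_ncard hsub (Set.toFinite _)

/-- **Pigeonhole Lemma for intervals** (Lemma 5.12): let `γ` be a limit ordinal and
`M_0 < M_1 < … < M_{r-1}` pairwise disjoint convex suborders of a countable linear order `Y`
such that (1) every tail of every `M_p` has rank `≥ γ`, and (2) every convex suborder of `Y`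
containing no tail of any `M_p` has rank `< γ`.  Then `rk(Y) < γ + n` whenever `2 ^ n > r`. -/
theorem pigeonhole_for_intervals {Y : Type*} [LinearOrder Y] [Countable Y]
    (γ : Ordinal) (hγ : Order.IsSuccLimit γ) (r : ℕ) (M : Fin r → Set Y)
    (hconv : ∀ p, (M p).OrdConnected)
    (hdisj : ∀ p q, p ≠ q → Disjoint (M p) (M q))
    (hlt : ∀ p q, p < q → ∀ x ∈ M p, ∀ y ∈ M q, x < y)
    (htail : ∀ p, ∀ c ∈ M p, RkGE γ {x ∈ M p | c < x})
    (hsmall : ∀ S : Set Y, S.OrdConnected →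
      (∀ p, ∀ c ∈ M p, ¬ {x ∈ M p | c < x} ⊆ S) → ¬ RkGE γ S)
    (n : ℕ) (hn : r < 2 ^ n) :
    ¬ RkGE (γ + n) (Set.univ : Set Y) := by
  intro h
  have hcount := key_count γ hγ r M htail hsmall n Set.univ Set.ordConnected_univ h
  have hle : ({p : Fin r | ∃ c ∈ M p, {x ∈ M p | c < x} ⊆ Set.univ}).ncard ≤ r := by
    have := Set.ncard_le_ncard (Set.subset_univ
      {p : Fin r | ∃ c ∈ M p, {x ∈ M p | c < x} ⊆ Set.univ}) Set.finite_univ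
    simpa [Set.ncard_univ] using this
  omega
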